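/- Let γ>0, s*≥0 and let s, v be vectors in ℝ³. The following are equivalent: (i) γv = ((|s| - s*)⁺/|s|) s (with the convention that the right side is 0 when s = 0); (ii) setting z := s - γv, one has |z| ≤ s* and z·v ≥ s*|v|. -/

import Mathlib

/-!
The conditions in (ii) say that `z = s - γ v` lies in the ball of radius `s*` and that `v` is an
outer normal of that ball at `z`. They hold for the shrunk vector `γ v = ((|s| - s*)⁺ / |s|) s` by
direct computation, and they determine `γ v` uniquely: for two solutions `w₁, w₂` the
Cauchy–Schwarz inequality gives `⟪w₁ - w₂, w₁⟫ ≥ 0 ≥ ⟪w₁ - w₂, w₂⟫`, hence `‖w₁ - w₂‖² ≤ 0`.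
-/

open RealInnerProductSpace

variable {E : Type*} [NormedAddCommGroup E] [InnerProductSpace ℝ E]

noncomputable def softThreshold [DecidableEq E] (r : ℝ) (s : E) : E :=
  if s = 0 then 0 else (max (‖s‖ - r) 0 / ‖s‖) • s

/-- Condition (ii), written for `w = γ v`. -/
def StickSlip (r : ℝ) (s w : E) : Prop :=
  ‖s - w‖ ≤ r ∧ r * ‖w‖ ≤ ⟪s - w, w⟫

lemma softThreshold_of_norm_le [DecidableEq E] {r : ℝ} {s : E} (h : ‖s‖ ≤ r) :
    softThreshold r s = 0 := by
  by_cases hs : s = 0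
  · simp [softThreshold, hs]
  · simp [softThreshold, hs, max_eq_right (sub_nonpos.mpr h)]

lemma sub_softThreshold_of_lt_norm [DecidableEq E] {r : ℝ} {s : E} (hr : 0 ≤ r) (h : r < ‖s‖) :
    s - softThreshold r s = (r / ‖s‖) • s := by
  have hs : ‖s‖ ≠ 0 := (hr.trans_lt h).ne'
  have hcoef : r / ‖s‖ = 1 - (‖s‖ - r) / ‖s‖ := by field_simp; ring
  rw [softThreshold, if_neg (norm_ne_zero_iff.mp hs), max_eq_left (sub_nonneg.mpr h.le), hcoef,
    sub_smul, one_smul]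

lemma stickSlip_softThreshold [DecidableEq E] {r : ℝ} (hr : 0 ≤ r) (s : E) :
    StickSlip r s (softThreshold r s) := by
  rcases le_or_gt ‖s‖ r with h | h
  · simp [StickSlip, softThreshold_of_norm_le h, h]
  have hs : 0 < ‖s‖ := hr.trans_lt h
  have hz := sub_softThreshold_of_lt_norm hr h
  have hw : softThreshold r s = (1 - r / ‖s‖) • s := by
    rw [sub_smul, one_smul, ← hz, sub_sub_cancel]
  have ht : 0 ≤ 1 - r / ‖s‖ := sub_nonneg.mpr ((div_le_one hs).mpr h.le)
  constructor
  · rw [hz, norm_smul, Real.norm_of_nonneg (div_nonneg hr hs.le), div_mul_cancel₀ _ hs.ne']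
  · rw [hz, hw, real_inner_smul_left, real_inner_smul_right, real_inner_self_eq_norm_sq,
      norm_smul, Real.norm_of_nonneg ht]
    exact le_of_eq (by field_simp)

lemma inner_le_mul_norm_of_norm_le {r : ℝ} {z w : E} (hz : ‖z‖ ≤ r) : ⟪z, w⟫ ≤ r * ‖w‖ :=
  (real_inner_le_norm z w).trans (mul_le_mul_of_nonneg_right hz (norm_nonneg w))

lemma StickSlip.eq {r : ℝ} {s w₁ w₂ : E} (h₁ : StickSlip r s w₁) (h₂ : StickSlip r s w₂) :
    w₁ = w₂ := by
  have e₁ : ⟪s - w₂, w₁⟫ ≤ ⟪s - w₁, w₁⟫ := (inner_le_mul_norm_of_norm_le h₂.1).trans h₁.2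
  have e₂ : ⟪s - w₁, w₂⟫ ≤ ⟪s - w₂, w₂⟫ := (inner_le_mul_norm_of_norm_le h₁.1).trans h₂.2
  have key : ⟪w₁ - w₂, w₁ - w₂⟫ =
      (⟪s - w₂, w₁⟫ - ⟪s - w₁, w₁⟫) + (⟪s - w₁, w₂⟫ - ⟪s - w₂, w₂⟫) := by
    simp only [inner_sub_left, inner_sub_right, real_inner_comm w₁ w₂]
    ring
  exact sub_eq_zero.mp (real_inner_self_nonpos.mp (by linarith))

lemma stickSlip_iff_eq_softThreshold [DecidableEq E] {r : ℝ} (hr : 0 ≤ r) {s w : E} :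
    StickSlip r s w ↔ w = softThreshold r s :=
  ⟨fun h => h.eq (stickSlip_softThreshold hr s), fun h => h ▸ stickSlip_softThreshold hr s⟩

lemma stickSlip_smul_iff {r γ : ℝ} (hγ : 0 < γ) {s v : E} :
    StickSlip r s (γ • v) ↔ ‖s - γ • v‖ ≤ r ∧ r * ‖v‖ ≤ ⟪s - γ • v, v⟫ := by
  rw [StickSlip, norm_smul, Real.norm_of_nonneg hγ.le, real_inner_smul_right, mul_left_comm,
    mul_le_mul_iff_right₀ hγ]

theorem stmt_4 (γ sstar : ℝ) (hγ : 0 < γ) (hs : 0 ≤ sstar)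
    (s v : EuclideanSpace ℝ (Fin 3)) :
    (γ • v = if s = 0 then 0 else (max (‖s‖ - sstar) 0 / ‖s‖) • s) ↔
      (‖s - γ • v‖ ≤ sstar ∧ (inner ℝ (s - γ • v) v : ℝ) ≥ sstar * ‖v‖) := by
  rw [ge_iff_le, ← stickSlip_smul_iff hγ, stickSlip_iff_eq_softThreshold hs, softThreshold]
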